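/- Let d ≥ 3 and ψ_{a,b,c}(X) = a(Tr X/d)Id_d + bX + cXᵀ + (1−a−b−c)diag(X) with a,b,c real. Then ψ_{a,b,c} is a positive map (maps positive semidefinite matrices to positive semidefinite matrices) if and only if all of the following hold: (1) 0 ≤ a ≤ d/(d−1); (2) (d−2)a/d + b + c ≤ 1; (3) (d−2)a/d + |b−c| ≤ 1; (4) b + c ≥ −1/(d−1); (5) b − (d−1)c ≤ 1; (6) c − (d−1)b ≤ 1. -/

import Mathlib

/-
A positive semidefinite matrix is a sum of rank-one projections `v v*`, so `ψ` is positive iff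
`⟨η, ψ(v v*) η⟩ ≥ 0` for all `v, η`. This form is `(a/d) N + b Z + c W + (1 - a - b - c) D` with
`N = |v|²|η|²`, `Z = |⟨v, η⟩|²`, `W = |∑ vᵢ ηᵢ|²`, `D = ∑ rᵢ²`, where `rᵢ = |vᵢ||ηᵢ|`. With
`S = ∑ rᵢ` and `x = max(2 max rᵢ - S, 0)²`, the triangle and Cauchy–Schwarz inequalities give
`S² ≤ N`, `Z, W ∈ [x, S²]` and `D ∈ [S²/d, (S² + x)/2]`; the form is affine in `(Z, W, D)`, so it
is nonnegative once it is so at the corners, which are eight linear conditions on `(a, b, c)`.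
Each of them is attained by an explicit pair: vectors supported on two coordinates, the all-ones
vector, and `u = (ωᵏ)` for a primitive `d`-th root of unity `ω`, for which `u ⬝ᵥ u = ∑ ω²ᵏ = 0`
as `d ≥ 3`. The eight conditions are the seven of the statement with `|b - c|` split in two.
-/

open Matrix ComplexOrder

/-- The map `ψ_{a,b,c}(X) = a (Tr X / d) Id + b X + c Xᵀ + (1-a-b-c) diag(X)`. -/
noncomputable def psi (d : ℕ) (a b c : ℂ) (X : Matrix (Fin d) (Fin d) ℂ) :
    Matrix (Fin d) (Fin d) ℂ :=
  (a * (X.trace / d)) • (1 : Matrix (Fin d) (Fin d) ℂ) + b • X + c • Xᵀ +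
    (1 - a - b - c) • Matrix.diagonal (fun i => X i i)

open Complex

section

variable {n : Type*} [Fintype n]

-- `⟨η, Φ(v v*) η⟩` for `Φ X = A (Tr X) 1 + b X + c Xᵀ + t diag X`.
noncomputable def quadForm (A b c t : ℝ) (v η : n → ℂ) : ℝ :=
  A * ((∑ i, normSq (v i)) * ∑ i, normSq (η i)) + b * normSq (star v ⬝ᵥ η) +
    c * normSq (v ⬝ᵥ η) + t * ∑ i, normSq (v i) * normSq (η i)

lemma star_dotProduct_self_eq_sum_normSq (v : n → ℂ) :
    star v ⬝ᵥ v = ((∑ i, normSq (v i) : ℝ) : ℂ) := by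
  simp [dotProduct, Complex.normSq_eq_conj_mul_self]

lemma dotProduct_vecMulVec_mulVec {R : Type*} [CommSemiring R] (x u w y : n → R) :
    x ⬝ᵥ (vecMulVec u w *ᵥ y) = (x ⬝ᵥ u) * (w ⬝ᵥ y) := by
  rw [vecMulVec_mulVec, op_smul_eq_smul, dotProduct_smul, smul_eq_mul, mul_comm]

lemma star_dotProduct_psi_vecMulVec_mulVec {d : ℕ} (a b c : ℝ) (v η : Fin d → ℂ) :
    star η ⬝ᵥ (psi d a b c (vecMulVec v (star v)) *ᵥ η) =
      quadForm (a / d) b c (1 - a - b - c) v η := by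
  have hdiag : star η ⬝ᵥ (diagonal (fun i => vecMulVec v (star v) i i) *ᵥ η) =
      ((∑ i, normSq (v i) * normSq (η i) : ℝ) : ℂ) := by
    simp only [dotProduct, Pi.star_apply, vecMulVec_apply, mulVec_diagonal, ofReal_sum,
      ofReal_mul, normSq_eq_conj_mul_self, star_def]
    exact Finset.sum_congr rfl fun i _ => by ring
  simp only [psi, add_mulVec, smul_mulVec, one_mulVec, dotProduct_add, dotProduct_smul,
    transpose_vecMulVec, dotProduct_vecMulVec_mulVec, trace_vecMulVec, hdiag, smul_eq_mul]
  rw [dotProduct_comm v, star_dotProduct_self_eq_sum_normSq, star_dotProduct_self_eq_sum_normSq,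
    star_dotProduct, star_dotProduct_star, quadForm]
  simp only [star_def, ← normSq_eq_conj_mul_self]
  push_cast
  ring

lemma psi_conjTranspose {d : ℕ} (a b c : ℝ) (X : Matrix (Fin d) (Fin d) ℂ) :
    (psi d a b c X)ᴴ = psi d a b c Xᴴ := by
  simp [psi, conjTranspose_smul, trace_conjTranspose, conjTranspose_transpose,
    transpose_conjTranspose, Pi.star_def]

lemma psi_add {d : ℕ} (a b c : ℂ) (X Y : Matrix (Fin d) (Fin d) ℂ) :
    psi d a b c (X + Y) = psi d a b c X + psi d a b c Y := by
  simp only [psi, trace_add, transpose_add, Matrix.add_apply, ← diagonal_add, add_div, mul_add,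
    add_smul, smul_add]
  abel

lemma psi_sum {d : ℕ} (a b c : ℂ) {ι : Type*} (s : Finset ι) (X : ι → Matrix (Fin d) (Fin d) ℂ) :
    psi d a b c (∑ k ∈ s, X k) = ∑ k ∈ s, psi d a b c (X k) :=
  map_sum (AddMonoidHom.mk' (psi d a b c) (psi_add a b c)) X s

lemma forall_psi_posSemidef_iff {d : ℕ} (a b c : ℝ) :
    (∀ X : Matrix (Fin d) (Fin d) ℂ, X.PosSemidef → (psi d a b c X).PosSemidef) ↔
      ∀ v η : Fin d → ℂ, 0 ≤ quadForm (a / d) b c (1 - a - b - c) v η := by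
  constructor
  · intro h v η
    have := (h _ (posSemidef_vecMulVec_self_star v)).dotProduct_mulVec_nonneg η
    rwa [star_dotProduct_psi_vecMulVec_mulVec, Complex.zero_le_real] at this
  · intro h X hX
    obtain ⟨m, v, rfl⟩ := posSemidef_iff_eq_sum_vecMulVec.mp hX
    rw [psi_sum]
    refine posSemidef_sum _ fun k _ => .of_dotProduct_mulVec_nonneg ?_ fun η => ?_
    · rw [IsHermitian, psi_conjTranspose, (posSemidef_vecMulVec_self_star _).isHermitian.eq]
    · rw [star_dotProduct_psi_vecMulVec_mulVec]
      exact_mod_cast h _ _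

-- Nonnegativity of `A + b z + c w + t τ` at the values `(z, w, τ) = (Z, W, D) / N` of the eight
-- test pairs of `FormConditions.of_quadForm_nonneg`: `(0,0,0), (1,1,1), (0,0,½), (1,0,½),
-- (0,1,½), (1,1,1/δ), (0,1,1/δ), (1,0,1/δ)`.
def FormConditions (δ A b c t : ℝ) : Prop :=
  0 ≤ A ∧ 0 ≤ A + b + c + t ∧ 0 ≤ 2 * A + t ∧ 0 ≤ 2 * (A + b) + t ∧ 0 ≤ 2 * (A + c) + t ∧
    0 ≤ δ * (A + b + c) + t ∧ 0 ≤ δ * (A + c) + t ∧ 0 ≤ δ * (A + b) + t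

lemma add_min_mul_le_mul {b x y z : ℝ} (hxz : x ≤ z) (hzy : z ≤ y) :
    b * x + min b 0 * (y - x) ≤ b * z := by
  rcases le_total b 0 with hb | hb
  · rw [min_eq_left hb]; nlinarith
  · rw [min_eq_right hb]; nlinarith

lemma FormConditions.nonneg {δ A b c t s x Z W D : ℝ} (h : FormConditions δ A b c t)
    (hδ : 0 < δ) (hx : 0 ≤ x) (hxZ : x ≤ Z) (hZs : Z ≤ s) (hxW : x ≤ W) (hWs : W ≤ s)
    (hsD : s ≤ δ * D) (hDs : 2 * D ≤ s + x) :
    0 ≤ A * s + b * Z + c * W + t * D := by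
  obtain ⟨h₁, h₂, h₃, h₄, h₅, h₆, h₇, h₈⟩ := h
  have hlow : A * s + (b + c) * x + (min b 0 + min c 0) * (s - x) ≤ A * s + b * Z + c * W := by
    linarith [add_min_mul_le_mul (b := b) hxZ hZs, add_min_mul_le_mul (b := c) hxW hWs]
  rcases le_or_gt 0 t with ht | ht
  · have hcorner : 0 ≤ δ * (A + min b 0 + min c 0) + t := by
      rcases min_cases b 0 with ⟨hb, -⟩ | ⟨hb, -⟩ <;>
        rcases min_cases c 0 with ⟨hc, -⟩ | ⟨hc, -⟩ <;> rw [hb, hc] <;> nlinarith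
    have hμ : (min b 0 + min c 0) * x ≤ (b + c) * x :=
      mul_le_mul_of_nonneg_right (add_le_add (min_le_left b 0) (min_le_left c 0)) hx
    have : 0 ≤ δ * (A * s + b * Z + c * W + t * D) := by
      nlinarith [mul_nonneg hcorner (hx.trans (hxZ.trans hZs)), mul_le_mul_of_nonneg_left hsD ht]
    exact nonneg_of_mul_nonneg_right (by linarith) hδ
  · have hcorner : 0 ≤ 2 * (A + min b 0 + min c 0) + t := by
      rcases min_cases b 0 with ⟨hb, -⟩ | ⟨hb, -⟩ <;>
        rcases min_cases c 0 with ⟨hc, -⟩ | ⟨hc, -⟩ <;> rw [hb, hc] <;> linarith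
    -- With `μ = min b 0 + min c 0`:
    -- `2 (A s + (b + c) x + μ (s - x)) + t (s + x) = (s - x) (2 (A + μ) + t) + 2 x (A + b + c + t)`
    linarith [mul_nonneg (sub_nonneg.2 (hxZ.trans hZs)) hcorner, mul_nonneg hx h₂,
      mul_le_mul_of_nonpos_left hDs ht.le]

lemma two_mul_norm_sub_le_norm_sum {E : Type*} [SeminormedAddCommGroup E] (u : n → E) (j : n) :
    2 * ‖u j‖ - ∑ i, ‖u i‖ ≤ ‖∑ i, u i‖ := by
  classical
  have hsplit := Finset.add_sum_erase Finset.univ u (Finset.mem_univ j)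
  have hsplit' := Finset.add_sum_erase Finset.univ (‖u ·‖) (Finset.mem_univ j)
  have : ‖u j‖ ≤ ‖∑ i, u i‖ + ∑ i ∈ Finset.univ.erase j, ‖u i‖ := by
    calc ‖u j‖ = ‖∑ i, u i - ∑ i ∈ Finset.univ.erase j, u i‖ := by
          rw [← hsplit, add_sub_cancel_right]
      _ ≤ ‖∑ i, u i‖ + ‖∑ i ∈ Finset.univ.erase j, u i‖ := norm_sub_le _ _
      _ ≤ _ := by gcongr; exact norm_sum_le _ _
  linarith

lemma sq_max_le_normSq_sum_le (u : n → ℂ) (j : n) :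
    max (2 * ‖u j‖ - ∑ i, ‖u i‖) 0 ^ 2 ≤ normSq (∑ i, u i) ∧
      normSq (∑ i, u i) ≤ (∑ i, ‖u i‖) ^ 2 := by
  rw [← Complex.sq_norm]
  exact ⟨pow_le_pow_left₀ (le_max_right _ _) (max_le (two_mul_norm_sub_le_norm_sum u j)
    (norm_nonneg _)) 2, pow_le_pow_left₀ (norm_nonneg _) (norm_sum_le _ _) 2⟩

lemma two_mul_sum_sq_le {r : n → ℝ} (hr : ∀ i, 0 ≤ r i) {j : n} (hj : ∀ i, r i ≤ r j) :
    2 * ∑ i, r i ^ 2 ≤ (∑ i, r i) ^ 2 + max (2 * r j - ∑ i, r i) 0 ^ 2 := by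
  classical
  have hS : 0 ≤ ∑ i, r i := Finset.sum_nonneg fun i _ => hr i
  have hle_mul : ∑ i, r i ^ 2 ≤ r j * ∑ i, r i := by
    rw [Finset.mul_sum]
    exact Finset.sum_le_sum fun i _ => by rw [sq]; exact mul_le_mul_of_nonneg_right (hj i) (hr i)
  have hrest : ∑ i ∈ Finset.univ.erase j, r i = ∑ i, r i - r j := by
    rw [← Finset.add_sum_erase _ _ (Finset.mem_univ j), add_sub_cancel_left]
  have hle_sq : ∑ i, r i ^ 2 ≤ r j ^ 2 + (∑ i, r i - r j) ^ 2 := by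
    rw [← Finset.add_sum_erase _ _ (Finset.mem_univ j), ← hrest]
    gcongr
    exact Finset.sum_sq_le_sq_sum_of_nonneg fun i _ => hr i
  rcases le_total (2 * r j - ∑ i, r i) 0 with h | h
  · rw [max_eq_right h]; nlinarith
  · rw [max_eq_left h]; nlinarith

lemma quadForm_nonneg [Nonempty n] {A b c t : ℝ} (h : FormConditions (Fintype.card n) A b c t)
    (v η : n → ℂ) : 0 ≤ quadForm A b c t v η := by
  obtain ⟨j, hj⟩ := Finite.exists_max fun i => ‖v i‖ * ‖η i‖
  have hN : (∑ i, ‖v i‖ * ‖η i‖) ^ 2 ≤ (∑ i, normSq (v i)) * ∑ i, normSq (η i) := by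
    simpa only [Complex.sq_norm] using Finset.sum_mul_sq_le_sq_mul_sq Finset.univ (‖v ·‖) (‖η ·‖)
  have hD : ∑ i, normSq (v i) * normSq (η i) = ∑ i, (‖v i‖ * ‖η i‖) ^ 2 := by
    simp only [mul_pow, Complex.sq_norm]
  have hZ := sq_max_le_normSq_sum_le (fun i => star (v i) * η i) j
  have hW := sq_max_le_normSq_sum_le (fun i => v i * η i) j
  simp only [norm_mul, norm_star] at hZ hW
  have hsD : (∑ i, ‖v i‖ * ‖η i‖) ^ 2 ≤ Fintype.card n * ∑ i, (‖v i‖ * ‖η i‖) ^ 2 := by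
    simpa using sq_sum_le_card_mul_sum_sq (s := Finset.univ) (f := fun i => ‖v i‖ * ‖η i‖)
  have hDs := two_mul_sum_sq_le (fun i => mul_nonneg (norm_nonneg (v i)) (norm_nonneg (η i))) hj
  have key := h.nonneg (by simp [Fintype.card_pos]) (sq_nonneg _) hZ.1 hZ.2 hW.1 hW.2 hsD hDs
  rw [quadForm, hD]
  simp only [dotProduct, Pi.star_apply]
  linarith [mul_le_mul_of_nonneg_left hN h.1]

lemma quadForm_of_norm_eq_one {A b c t : ℝ} {v η : n → ℂ} (hv : ∀ i, ‖v i‖ = 1)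
    (hη : ∀ i, ‖η i‖ = 1) :
    quadForm A b c t v η = A * Fintype.card n ^ 2 + b * normSq (star v ⬝ᵥ η) +
      c * normSq (v ⬝ᵥ η) + t * Fintype.card n := by
  simp only [quadForm, ← Complex.sq_norm, hv, hη, one_pow, mul_one, Finset.sum_const,
    Finset.card_univ, nsmul_eq_mul]
  ring

lemma star_dotProduct_self_of_norm_eq_one {v : n → ℂ} (hv : ∀ i, ‖v i‖ = 1) :
    star v ⬝ᵥ v = Fintype.card n := by
  simp [star_dotProduct_self_eq_sum_normSq, ← Complex.sq_norm, hv]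

lemma quadForm_single_add_single [DecidableEq n] {i j : n} (hij : i ≠ j) (A b c t : ℝ)
    (p q s u : ℂ) :
    quadForm A b c t (Pi.single i p + Pi.single j q) (Pi.single i s + Pi.single j u) =
      A * ((normSq p + normSq q) * (normSq s + normSq u)) +
        b * normSq (star p * s + star q * u) + c * normSq (p * s + q * u) +
        t * (normSq p * normSq s + normSq q * normSq u) := by
  simp only [quadForm, dotProduct, Pi.star_apply]
  rw [Fintype.sum_eq_add i j hij, Fintype.sum_eq_add i j hij, Fintype.sum_eq_add i j hij,
    Fintype.sum_eq_add i j hij, Fintype.sum_eq_add i j hij]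
  · simp [hij, hij.symm]
  all_goals rintro k ⟨hki, hkj⟩; simp [hki, hkj]

lemma exists_norm_eq_one_dotProduct_self_eq_zero {d : ℕ} (hd : 3 ≤ d) :
    ∃ u : Fin d → ℂ, (∀ i, ‖u i‖ = 1) ∧ u ⬝ᵥ u = 0 := by
  have hω := Complex.isPrimitiveRoot_exp d (by omega)
  set ω := exp (2 * Real.pi * I / d)
  have hω2 : ω ^ 2 ≠ 1 := hω.pow_ne_one_of_pos_of_lt (by norm_num) (by omega)
  refine ⟨fun i => ω ^ (i : ℕ), fun i => by simp [hω.norm'_eq_one (by omega)], ?_⟩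
  simp only [dotProduct, ← pow_add, ← two_mul, pow_mul]
  rw [Fin.sum_univ_eq_sum_range (fun k => (ω ^ 2) ^ k), geom_sum_eq hω2, ← pow_mul, mul_comm,
    pow_mul, hω.pow_eq_one, one_pow, sub_self, zero_div]

lemma FormConditions.of_quadForm_nonneg {d : ℕ} (hd : 3 ≤ d) {A b c t : ℝ}
    (h : ∀ v η : Fin d → ℂ, 0 ≤ quadForm A b c t v η) : FormConditions d A b c t := by
  have hd₀ : (0 : ℝ) < d := by positivity
  have hij : (⟨0, by omega⟩ : Fin d) ≠ ⟨1, by omega⟩ := by simp [Fin.ext_iff]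
  have pair (p q s u : ℂ) := quadForm_single_add_single hij A b c t p q s u ▸ h _ _
  have unimodular {v η : Fin d → ℂ} (hv : ∀ i, ‖v i‖ = 1) (hη : ∀ i, ‖η i‖ = 1) :=
    quadForm_of_norm_eq_one (A := A) (b := b) (c := c) (t := t) hv hη ▸ h v η
  obtain ⟨ω, hω, hωω⟩ := exists_norm_eq_one_dotProduct_self_eq_zero hd
  have hone : ∀ i, ‖(1 : Fin d → ℂ) i‖ = 1 := by simp
  have hstar : ∀ i, ‖star ω i‖ = 1 := by simpa using hω
  refine ⟨?_, ?_, ?_, ?_, ?_, ?_, ?_, ?_⟩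
  · simpa using pair 1 0 0 1
  · simpa using pair 1 0 1 0
  · have := pair 1 1 1 (-1)
    norm_num at this
    linarith
  · have := pair 1 I 1 I
    norm_num [normSq_apply] at this
    linarith
  · have := pair 1 I 1 (-I)
    norm_num [normSq_apply] at this
    linarith
  · have := unimodular hone hone
    simp at this
    exact nonneg_of_mul_nonneg_right (by linarith) hd₀
  · have := unimodular hω hstar
    simp [star_dotProduct_star, hωω, dotProduct_comm ω,
      star_dotProduct_self_of_norm_eq_one hω] at this
    exact nonneg_of_mul_nonneg_right (by linarith) hd₀
  · have := unimodular hω hω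
    simp [star_dotProduct_self_of_norm_eq_one hω, hωω] at this
    exact nonneg_of_mul_nonneg_right (by linarith) hd₀

end

lemma formConditions_iff {δ a b c : ℝ} (hδ : 1 < δ) :
    FormConditions δ (a / δ) b c (1 - a - b - c) ↔
      0 ≤ a ∧ a ≤ δ / (δ - 1) ∧ (δ - 2) * a / δ + b + c ≤ 1 ∧ (δ - 2) * a / δ + |b - c| ≤ 1 ∧
        -(1 / (δ - 1)) ≤ b + c ∧ b - (δ - 1) * c ≤ 1 ∧ c - (δ - 1) * b ≤ 1 := by
  have hδ₀ : 0 < δ := by linarith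
  have hδ₁ : 0 < δ - 1 := sub_pos.2 hδ
  obtain ⟨A, rfl⟩ : ∃ A, a = δ * A := ⟨a / δ, by field_simp⟩
  have e₀ : δ * A / δ = A := by field_simp
  have e₁ : (δ - 2) * (δ * A) / δ = (δ - 2) * A := by field_simp
  have e₂ : δ * A ≤ δ / (δ - 1) ↔ (δ - 1) * A ≤ 1 := by
    rw [le_div_iff₀ hδ₁, mul_assoc, mul_le_iff_le_one_right hδ₀, mul_comm]
  have e₃ : -(1 / (δ - 1)) ≤ b + c ↔ 0 ≤ 1 + (δ - 1) * (b + c) := by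
    rw [neg_le, le_div_iff₀ hδ₁]
    constructor <;> intro h <;> linarith
  have e₄ : (δ - 2) * A + |b - c| ≤ 1 ↔ b - c ≤ 1 - (δ - 2) * A ∧ c - b ≤ 1 - (δ - 2) * A := by
    rw [add_comm, ← le_sub_iff_add_le, abs_sub_le_iff]
  rw [FormConditions, e₀, e₁, e₂, e₃, e₄, mul_nonneg_iff_of_pos_left hδ₀]
  constructor
  · rintro ⟨h₁, h₂, h₃, h₄, h₅, h₆, h₇, h₈⟩
    exact ⟨h₁, by linarith, by linarith, ⟨by linarith, by linarith⟩, by linarith, by linarith,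
      by linarith⟩
  · rintro ⟨h₁, h₂, h₃, ⟨h₄, h₅⟩, h₆, h₇, h₈⟩
    exact ⟨h₁, by linarith, by linarith, by linarith, by linarith, by linarith, by linarith,
      by linarith⟩

theorem stmt_10 (d : ℕ) (hd : 3 ≤ d) (a b c : ℝ) :
    (∀ X : Matrix (Fin d) (Fin d) ℂ, X.PosSemidef →
        (psi d (a : ℂ) (b : ℂ) (c : ℂ) X).PosSemidef) ↔
    (0 ≤ a ∧ a ≤ d / ((d : ℝ) - 1) ∧
      ((d : ℝ) - 2) * a / d + b + c ≤ 1 ∧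
      ((d : ℝ) - 2) * a / d + |b - c| ≤ 1 ∧
      -(1 / ((d : ℝ) - 1)) ≤ b + c ∧
      b - ((d : ℝ) - 1) * c ≤ 1 ∧
      c - ((d : ℝ) - 1) * b ≤ 1) := by
  have : Nonempty (Fin d) := ⟨⟨0, by omega⟩⟩
  rw [forall_psi_posSemidef_iff, ← formConditions_iff (by norm_cast; omega)]
  exact ⟨FormConditions.of_quadForm_nonneg hd,
    fun h => quadForm_nonneg (by simpa only [Fintype.card_fin] using h)⟩
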